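/- arXiv:1601.01894 — 6 statements merged into one kernel-verified Lean document; each statement's English description precedes it below -/
import Mathlib

section
/- The set of maximal element orders (under divisibility) of PGL(2,9) is {3, 8, 10}; equivalently, the set of element orders of PGL(2,9) is {1, 2, 3, 4, 5, 8, 10}. -/
/-- `PGL(2,9)`: the projective general linear group of degree 2 over the field
with 9 elements, realized as `GL(2, F₉)` modulo its center. -/
abbrev PGL29 : Type :=
  (Matrix.GeneralLinearGroup (Fin 2) (GaloisField 3 2)) ⧸
    Subgroup.center (Matrix.GeneralLinearGroup (Fin 2) (GaloisField 3 2))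

/-!
Let `K` be a finite field with `q` elements and characteristic `p`. A matrix `A ∈ GL₂(K)` is
annihilated by its characteristic polynomial `f`, a quadratic with nonzero constant term, and
`f` divides `X ^ n - c` for some `n ∈ {p, q - 1, q + 1}`, which makes `A ^ n` scalar:
* if `f = (X - λ)²`, then `f ∣ (X - λ) ^ p = X ^ p - λ ^ p`;
* if `f = (X - λ)(X - μ)` with `λ ≠ μ`, both roots lie in `Kˣ`, so `f ∣ X ^ (q - 1) - 1`;
* if `f` is irreducible, a root `α` lives in `𝔽_{q²}`, where `α ^ (q + 1) = α · α ^ q` is fixed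
  by Frobenius, hence lies in `K`.

Conversely `[1, 1; 0, 1]` has order `p` in `PGL(2, q)`, and the regular representations of
generators of `(K × K)ˣ` and of `𝔽_{q²}ˣ` have orders `q - 1` and `q + 1`. Element orders of a
finite group are closed under taking divisors, so for `q = 9` they are the divisors of
`3`, `8` and `10`.
-/

open Polynomial Matrix

theorem exists_orderOf_eq_of_dvd {G : Type*} [Group G] [Finite G] {m n : ℕ}
    (hm : ∃ g : G, orderOf g = m) (hn : n ∣ m) : ∃ g : G, orderOf g = n := by
  obtain ⟨g, rfl⟩ := hm
  exact ⟨_, orderOf_pow_orderOf_div (orderOf_pos g).ne' hn⟩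

namespace QuotientGroup

variable {G : Type*} [Group G] {N : Subgroup G} [N.Normal]

theorem orderOf_mk_dvd_iff (g : G) (n : ℕ) : orderOf (g : G ⧸ N) ∣ n ↔ g ^ n ∈ N := by
  rw [orderOf_dvd_iff_pow_eq_one, ← QuotientGroup.mk_pow, QuotientGroup.eq_one_iff]

theorem orderOf_mk_eq_of_forall_pow_mem_iff {g : G} {m : ℕ} (h : ∀ n, g ^ n ∈ N ↔ m ∣ n) :
    orderOf (g : G ⧸ N) = m :=
  Nat.dvd_right_iff_eq.1 fun n ↦ (orderOf_mk_dvd_iff g n).trans (h n)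

end QuotientGroup

namespace Polynomial

theorem Monic.exists_eq_X_sub_C_mul_X_sub_C {F : Type*} [Field F] {f : F[X]} (hm : f.Monic)
    (h2 : f.natDegree = 2) (hf : ¬Irreducible f) : ∃ a b, f = (X - C a) * (X - C b) := by
  obtain ⟨a, ha⟩ : ∃ a, f.IsRoot a := by
    by_contra! h
    exact hf (irreducible_of_degree_le_three_of_not_isRoot (by simp [h2]) h)
  have hfac := mul_divByMonic_eq_iff_isRoot.2 ha
  have hg : (f /ₘ (X - C a)).Monic := (monic_X_sub_C a).of_mul_monic_left (by rwa [hfac])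
  have hg1 : (f /ₘ (X - C a)).natDegree = 1 := by
    rw [natDegree_divByMonic f (monic_X_sub_C a), h2, natDegree_X_sub_C]
  refine ⟨a, -(f /ₘ (X - C a)).coeff 0, ?_⟩
  rw [C_neg, sub_neg_eq_add, ← hg.eq_X_add_C hg1, hfac]

end Polynomial

namespace FiniteField

variable {K : Type*} [Field K] [Fintype K]

local notation "q" => Fintype.card K

variable {L : Type*} [CommRing L] [IsDomain L] [Algebra K L]

theorem mem_range_algebraMap_of_pow_card_eq_self {x : L} (hx : x ^ q = x) :
    x ∈ Set.range (algebraMap K L) := by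
  have hsplits : Splits (X ^ q - X : K[X]) := by
    rw [splits_iff_card_roots, roots_X_pow_card_sub_X, ← Finset.card_def, Finset.card_univ,
      X_pow_card_sub_X_natDegree_eq K Fintype.one_lt_card]
  have hroot : x ∈ ((X ^ q - X : K[X]).map (algebraMap K L)).roots := by
    rw [mem_roots (map_ne_zero (X_pow_card_sub_X_ne_zero K Fintype.one_lt_card))]
    simp [hx]
  rw [hsplits.roots_map, roots_X_pow_card_sub_X] at hroot
  simpa using hroot

theorem mem_range_algebraMap_iff_pow_card_sub_one_eq_one {x : L} (hx : x ≠ 0) :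
    x ∈ Set.range (algebraMap K L) ↔ x ^ (q - 1) = 1 := by
  constructor
  · rintro ⟨c, rfl⟩
    rw [← map_pow, pow_card_sub_one_eq_one c (by rintro rfl; simp at hx), map_one]
  · intro h
    apply mem_range_algebraMap_of_pow_card_eq_self
    rw [← Nat.sub_add_cancel Fintype.card_pos, pow_succ, h, one_mul]

theorem pow_card_add_one_mem_range_algebraMap {x : L} (hx : x ^ q ^ 2 = x) :
    x ^ (q + 1) ∈ Set.range (algebraMap K L) := by
  apply mem_range_algebraMap_of_pow_card_eq_self
  calc (x ^ (q + 1)) ^ q = x ^ q ^ 2 * x ^ q := by ring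
    _ = x ^ (q + 1) := by rw [hx, pow_succ']

theorem exists_dvd_X_pow_card_add_one_sub_C_of_irreducible {f : K[X]} (hf : Irreducible f)
    (h2 : f.natDegree = 2) : ∃ c, f ∣ X ^ (q + 1) - C c := by
  have := Fact.mk hf
  have hroot : AdjoinRoot.root f ^ q ^ 2 = AdjoinRoot.root f := by
    have hdvd := hf.natDegree_dvd_iff_dvd_X_pow_card_pow_sub_X.1 (dvd_of_eq h2)
    rw [← AdjoinRoot.mk_eq_zero, Nat.card_eq_fintype_card] at hdvd
    simpa [sub_eq_zero] using hdvd
  obtain ⟨c, hc⟩ := pow_card_add_one_mem_range_algebraMap hroot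
  refine ⟨c, ?_⟩
  rw [← AdjoinRoot.mk_eq_zero]
  simp [← hc]

theorem exists_dvd_X_pow_sub_C_of_natDegree_eq_two (p : ℕ) [Fact p.Prime] [CharP K p]
    {f : K[X]} (hm : f.Monic) (h2 : f.natDegree = 2) (h0 : f.coeff 0 ≠ 0) :
    (∃ c, f ∣ X ^ p - C c) ∨ (∃ c, f ∣ X ^ (q - 1) - C c) ∨ ∃ c, f ∣ X ^ (q + 1) - C c := by
  by_cases hf : Irreducible f
  · exact .inr (.inr (exists_dvd_X_pow_card_add_one_sub_C_of_irreducible hf h2))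
  obtain ⟨a, b, rfl⟩ := hm.exists_eq_X_sub_C_mul_X_sub_C h2 hf
  rcases eq_or_ne a b with rfl | hab
  · refine .inl ⟨a ^ p, ?_⟩
    rw [C_pow, ← sub_pow_char, ← sq]
    exact pow_dvd_pow _ (Fact.out : p.Prime).two_le
  · obtain ⟨ha, hb⟩ : a ≠ 0 ∧ b ≠ 0 := by simpa [not_or] using h0
    refine .inr (.inl ⟨1, (isCoprime_X_sub_C_of_isUnit_sub (sub_ne_zero.2 hab).isUnit).mul_dvd
      ?_ ?_⟩) <;> rw [dvd_iff_isRoot] <;> simp [pow_card_sub_one_eq_one, ha, hb]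

end FiniteField

namespace Matrix.GeneralLinearGroup

local notation "PGL(2, " K ")" => GL (Fin 2) K ⧸ Subgroup.center (GL (Fin 2) K)

theorem pow_mem_center_of_dvd {n R : Type*} [Fintype n] [DecidableEq n] [CommRing R]
    {A : GL n R} {f : R[X]} (hA : aeval (A : Matrix n n R) f = 0) {m : ℕ} {c : R}
    (hf : f ∣ X ^ m - C c) : A ^ m ∈ Subgroup.center (GL n R) := by
  rw [mem_center_iff_val_mem_range_scalar]
  refine ⟨c, ?_⟩
  have hAm := aeval_eq_zero_of_dvd_aeval_eq_zero hf hA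
  rw [map_sub, map_pow, aeval_X, aeval_C, sub_eq_zero] at hAm
  rw [Units.val_pow_eq_pow_val, hAm, algebraMap_eq_diagonal, scalar_apply]
  rfl

theorem units_map_leftMulMatrix_mem_center_iff {ι R A : Type*} [Fintype ι] [DecidableEq ι]
    [CommRing R] [CommRing A] [Algebra R A] (b : Module.Basis ι R A) (u : Aˣ) :
    Units.map (Algebra.leftMulMatrix b : A →* Matrix ι ι R) u ∈ Subgroup.center (GL ι R) ↔
      (u : A) ∈ Set.range (algebraMap R A) := by
  rw [mem_center_iff_val_mem_range_scalar, Units.coe_map]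
  refine exists_congr fun c ↦ ?_
  rw [← (Algebra.leftMulMatrix_injective b).eq_iff, AlgHom.commutes, algebraMap_eq_diagonal]
  rfl

theorem upperRightHom_mem_center_iff {R : Type*} [CommRing R] (x : R) :
    upperRightHom x ∈ Subgroup.center (GL (Fin 2) R) ↔ x = 0 := by
  rw [mem_center_iff_val_mem_range_scalar]
  constructor
  · rintro ⟨c, hc⟩
    simpa [eq_comm] using congrFun (congrFun hc 0) 1
  · rintro rfl
    exact ⟨1, by simp [one_fin_two]⟩

theorem orderOf_mk_upperRightHom_one {R : Type*} [CommRing R] (p : ℕ) [CharP R p] :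
    orderOf (upperRightHom (1 : R) : PGL(2, R)) = p := by
  refine QuotientGroup.orderOf_mk_eq_of_forall_pow_mem_iff fun n ↦ ?_
  rw [← AddChar.map_nsmul_eq_pow, upperRightHom_mem_center_iff, nsmul_one,
    CharP.cast_eq_zero_iff R p]

section FiniteField

variable {K : Type*} [Field K] [Fintype K]

local notation "q" => Fintype.card K

-- `(z, 1) ∈ (K × K)ˣ` acts on `K × K` as `diag(z, 1)`.
theorem exists_orderOf_mk_eq_card_sub_one : ∃ g : PGL(2, K), orderOf g = q - 1 := by
  obtain ⟨z, hz⟩ := IsCyclic.exists_ofOrder_eq_natCard (α := Kˣ)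
  let b := Module.finBasisOfFinrankEq K (K × K) (n := 2) (by simp)
  refine ⟨_, QuotientGroup.orderOf_mk_eq_of_forall_pow_mem_iff
    (g := Units.map (Algebra.leftMulMatrix b : K × K →* _) (Units.map (MonoidHom.inl K K) z))
    fun n ↦ ?_⟩
  rw [← map_pow, units_map_leftMulMatrix_mem_center_iff, ← Nat.card_eq_fintype_card,
    ← Nat.card_units, ← hz, orderOf_dvd_iff_pow_eq_one, Units.ext_iff]
  simp [Prod.ext_iff]

theorem exists_orderOf_mk_eq_card_add_one (p : ℕ) [Fact p.Prime] [CharP K p] :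
    ∃ g : PGL(2, K), orderOf g = q + 1 := by
  let L := FiniteField.Extension K p 2
  obtain ⟨u, hu⟩ := IsCyclic.exists_ofOrder_eq_natCard (α := Lˣ)
  have hcard : Nat.card Lˣ = (q + 1) * (q - 1) := by
    rw [Nat.card_units, FiniteField.natCard_extension, Nat.card_eq_fintype_card,
      ← Nat.sq_sub_sq, one_pow]
  let b := Module.finBasisOfFinrankEq K L (FiniteField.finrank_extension K p 2)
  refine ⟨_, QuotientGroup.orderOf_mk_eq_of_forall_pow_mem_iff
    (g := Units.map (Algebra.leftMulMatrix b : L →* _) u) fun n ↦ ?_⟩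
  rw [← map_pow, units_map_leftMulMatrix_mem_center_iff,
    FiniteField.mem_range_algebraMap_iff_pow_card_sub_one_eq_one (u ^ n).ne_zero,
    ← Units.val_pow_eq_pow_val, Units.val_eq_one, ← pow_mul, ← orderOf_dvd_iff_pow_eq_one, hu,
    hcard, Nat.mul_dvd_mul_iff_right (Nat.sub_pos_of_lt Fintype.one_lt_card)]

theorem orderOf_mk_dvd_char_or_card_sub_one_or_card_add_one (p : ℕ) [Fact p.Prime] [CharP K p]
    (g : PGL(2, K)) : orderOf g ∣ p ∨ orderOf g ∣ q - 1 ∨ orderOf g ∣ q + 1 := by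
  obtain ⟨A, rfl⟩ := QuotientGroup.mk_surjective g
  have hcoeff : (A : Matrix (Fin 2) (Fin 2) K).charpoly.coeff 0 ≠ 0 := by
    simpa [det_eq_sign_charpoly_coeff] using A.det_ne_zero
  have orderOf_dvd {n : ℕ} {c : K} (hc : (A : Matrix (Fin 2) (Fin 2) K).charpoly ∣ X ^ n - C c) :
      orderOf (A : PGL(2, K)) ∣ n :=
    (QuotientGroup.orderOf_mk_dvd_iff A n).2 (pow_mem_center_of_dvd (aeval_self_charpoly _) hc)
  rcases FiniteField.exists_dvd_X_pow_sub_C_of_natDegree_eq_two p (charpoly_monic _) (by simp)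
    hcoeff with ⟨c, hc⟩ | ⟨c, hc⟩ | ⟨c, hc⟩
  exacts [.inl (orderOf_dvd hc), .inr (.inl (orderOf_dvd hc)), .inr (.inr (orderOf_dvd hc))]

theorem exists_orderOf_mk_eq_iff (p : ℕ) [Fact p.Prime] [CharP K p] (n : ℕ) :
    (∃ g : PGL(2, K), orderOf g = n) ↔ n ∣ p ∨ n ∣ q - 1 ∨ n ∣ q + 1 := by
  constructor
  · rintro ⟨g, rfl⟩
    exact orderOf_mk_dvd_char_or_card_sub_one_or_card_add_one p g
  · rintro (hn | hn | hn)
    exacts [exists_orderOf_eq_of_dvd ⟨_, orderOf_mk_upperRightHom_one p⟩ hn,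
      exists_orderOf_eq_of_dvd exists_orderOf_mk_eq_card_sub_one hn,
      exists_orderOf_eq_of_dvd (exists_orderOf_mk_eq_card_add_one p) hn]

end FiniteField

end Matrix.GeneralLinearGroup

/-- The set of element orders of PGL(2,9) is {1, 2, 3, 4, 5, 8, 10}. -/
theorem elementOrders_PGL29 :
    {n : ℕ | ∃ g : PGL29, orderOf g = n} =
      ({1, 2, 3, 4, 5, 8, 10} : Set ℕ) := by
  have := Fintype.ofFinite (GaloisField 3 2)
  have hcard : Fintype.card (GaloisField 3 2) = 9 := by
    simp [← Nat.card_eq_fintype_card, GaloisField.card 3 2 two_ne_zero]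
  ext n
  rw [Set.mem_ofPred_eq, Matrix.GeneralLinearGroup.exists_orderOf_mk_eq_iff 3, hcard]
  simp only [Set.mem_insert_iff, Set.mem_singleton_iff]
  constructor
  · rintro (h | h | h) <;> have := Nat.le_of_dvd (by norm_num) h <;> interval_cases n <;> simp_all
  · rintro (rfl | rfl | rfl | rfl | rfl | rfl | rfl) <;> norm_num
end

section
/- There exists a finite group G with π(G) = {2,3,5} whose prime graph has exactly one edge, namely between 2 and 5; that is, G has an element of order 10 but no element of order 6 and no element of order 15. (For example, G = F ⋊ Fˣ with F the field of order 81.) -/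
/-!
Take `G = F ⋊ Fˣ`, the affine group of the field `F` with `81` elements, of order `81 · 80`.
Since `Fˣ` is cyclic of order `80`, it contains an element of order `10`.
In characteristic `p` an element `x` of order `p * m` is a translation: `p`-th roots of unity
in a domain of characteristic `p` are trivial, so `x ^ m` is a nontrivial translation, and a
nontrivial translation is centralized only by translations. Translations have order dividing
`p`, so no element has order `3 * 2` or `3 * 5`.
-/

open SemidirectProduct

theorem IsCyclic.exists_orderOf_eq_of_dvd {α : Type*} [Group α] [Finite α] [IsCyclic α]
    {d : ℕ} (hd : d ∣ Nat.card α) : ∃ g : α, orderOf g = d := by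
  obtain ⟨g, hg⟩ := IsCyclic.exists_ofOrder_eq_natCard (α := α)
  exact ⟨g ^ (orderOf g / d), orderOf_pow_orderOf_div (hg ▸ Nat.card_pos.ne') (hg ▸ hd)⟩

theorem SemidirectProduct.mul_inl_mul_inv {N G : Type*} [CommGroup N] [Group G]
    {φ : G →* MulAut N} (x : N ⋊[φ] G) (n : N) :
    x * inl n * x⁻¹ = inl (φ (rightHom x) n) := by
  ext
  · simp [mul_left, inv_left, mul_comm, mul_left_comm]
  · simp [mul_right, inv_right]

theorem Units.pow_eq_one_of_pow_expChar_mul_eq_one {R : Type*} [CommRing R] [IsReduced R] (p : ℕ)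
    [ExpChar R p] {u : Rˣ} {m : ℕ} (h : u ^ (p * m) = 1) : u ^ m = 1 := by
  have h' : (u : R) ^ (p ^ 1 * m) = 1 := by rw [pow_one, ← Units.val_pow_eq_pow_val, h, val_one]
  rw [ExpChar.pow_prime_pow_mul_eq_one_iff] at h'
  exact Units.ext (by simpa using h')

section AffineGroup

variable (R : Type*) [CommRing R]

def affineAction : Rˣ →* MulAut (Multiplicative R) :=
  (MulAutMultiplicative R).symm.toMonoidHom.comp (DistribMulAction.toAddAut Rˣ R)

/-- The group of affine maps `x ↦ u * x + a` of `R`, with `inl a` the translations. -/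
abbrev AffineGroup := Multiplicative R ⋊[affineAction R] Rˣ

variable {R}

theorem affineAction_apply (u : Rˣ) (a : Multiplicative R) :
    affineAction R u a = .ofAdd (u * a.toAdd) :=
  rfl

theorem AffineGroup.card : Nat.card (AffineGroup R) = Nat.card R * Nat.card Rˣ := by
  rw [SemidirectProduct.card, Nat.card_congr Multiplicative.toAdd]

theorem AffineGroup.inl_pow_char (p : ℕ) [CharP R p] (a : Multiplicative R) :
    (inl a : AffineGroup R) ^ p = 1 := by
  rw [← map_pow, ← map_one inl]
  congr 1
  exact Multiplicative.toAdd.injective (by simp [nsmul_eq_mul])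

theorem AffineGroup.rightHom_eq_one_of_commute [IsDomain R] {x : AffineGroup R}
    {a : Multiplicative R} (ha : a ≠ 1) (h : Commute x (inl a)) : rightHom x = 1 := by
  have hfix : affineAction R (rightHom x) a = a :=
    inl_injective (by rw [← mul_inl_mul_inv, h.eq, mul_inv_cancel_right])
  rw [affineAction_apply] at hfix
  have hfix' : ((rightHom x : Rˣ) : R) * a.toAdd = 1 * a.toAdd := by
    simpa using congrArg Multiplicative.toAdd hfix
  exact Units.ext (mul_right_cancel₀ (fun h0 => ha (by simpa using h0)) hfix')

theorem AffineGroup.orderOf_eq_char_of_dvd [IsDomain R] (p : ℕ) [Fact p.Prime] [CharP R p]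
    {x : AffineGroup R} (hx : IsOfFinOrder x) (hp : p ∣ orderOf x) : orderOf x = p := by
  obtain ⟨m, hm⟩ := hp
  have hm0 : m ≠ 0 := by rintro rfl; exact hx.orderOf_pos.ne' (by simpa using hm)
  have hxm : orderOf (x ^ m) = p := by
    rw [orderOf_pow_of_dvd hm0 (Dvd.intro_left p hm.symm), hm,
      Nat.mul_div_cancel _ (Nat.pos_of_ne_zero hm0)]
  obtain ⟨a, ha⟩ : ∃ a, inl a = x ^ m := by
    rw [← MonoidHom.mem_range, range_inl_eq_ker_rightHom, MonoidHom.mem_ker, map_pow]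
    apply Units.pow_eq_one_of_pow_expChar_mul_eq_one p
    rw [← map_pow, ← hm, pow_orderOf_eq_one, map_one]
  have ha1 : a ≠ 1 := by
    rintro rfl
    rw [map_one, eq_comm, ← orderOf_eq_one_iff, hxm] at ha
    exact (Fact.out : p.Prime).one_lt.ne' ha
  obtain ⟨b, rfl⟩ : ∃ b, inl b = x := by
    rw [← MonoidHom.mem_range, range_inl_eq_ker_rightHom]
    exact rightHom_eq_one_of_commute ha1 (ha ▸ Commute.self_pow x m)
  exact Nat.dvd_antisymm (orderOf_dvd_of_pow_eq_one (inl_pow_char p b)) ⟨m, hm⟩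

end AffineGroup

theorem Nat.setOf_prime_and_dvd {n : ℕ} (hn : n ≠ 0) :
    {p : ℕ | p.Prime ∧ p ∣ n} = n.primeFactors := by
  ext
  simp [hn]

/-- There exists a finite group `G` with `π(G) = {2, 3, 5}` whose prime graph
has exactly one edge, between `2` and `5`: `G` has an element of order `10`
but no element of order `6` and no element of order `15`. -/
theorem exists_group_primeGraph_edge_two_five :
    ∃ (G : Type) (_ : Group G), Finite G ∧
      {p : ℕ | p.Prime ∧ p ∣ Nat.card G} = ({2, 3, 5} : Set ℕ) ∧
      (∃ g : G, orderOf g = 10) ∧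
      ¬(∃ g : G, orderOf g = 6) ∧ ¬(∃ g : G, orderOf g = 15) := by
  let F := GaloisField 3 4
  have hF : Nat.card F = 81 := by rw [GaloisField.card] <;> norm_num
  have hFu : Nat.card Fˣ = 80 := by rw [Nat.card_units, hF]
  have hG : Nat.card (AffineGroup F) = 6480 := by rw [AffineGroup.card, hF, hFu]
  have : Finite (AffineGroup F) := Nat.finite_of_card_ne_zero (by rw [hG]; norm_num)
  have order_three {g : AffineGroup F} (h : 3 ∣ orderOf g) : orderOf g = 3 :=
    AffineGroup.orderOf_eq_char_of_dvd 3 (isOfFinOrder_of_finite g) h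
  refine ⟨AffineGroup F, inferInstance, this, ?_, ?_, ?_, ?_⟩
  · rw [hG, Nat.setOf_prime_and_dvd (by norm_num)]
    simp [← Nat.toFinset_factors]
  · obtain ⟨u, hu⟩ : ∃ u : Fˣ, orderOf u = 10 :=
      IsCyclic.exists_orderOf_eq_of_dvd (by rw [hFu]; norm_num)
    exact ⟨inr u, by rw [orderOf_injective inr inr_injective, hu]⟩
  · rintro ⟨g, hg⟩
    have := order_three (by rw [hg]; norm_num)
    omega
  · rintro ⟨g, hg⟩
    have := order_three (by rw [hg]; norm_num)
    omega
end

section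
/- There exists a finite group G with normal series 1 ◁ H ◁ K ◁ G where |H| = 25, |K/H| = 3, |G/K| = 2, such that G has no element of order 6 and no element of order 15. -/
set_option maxRecDepth 100000

namespace TwoFrob

/-- The action of `DihedralGroup 3` on `F₅²`: `r 1` acts as multiplication by a
primitive cube root of unity `ω` of `F₂₅` (matrix `[[0,-1],[1,-1]]`), and
`sr 0` acts as the Frobenius automorphism `x ↦ x⁵` (matrix `[[1,-1],[0,-1]]`). -/
def act : DihedralGroup 3 → ZMod 5 × ZMod 5 → ZMod 5 × ZMod 5
  | .r i, (x, y) =>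
    match i.val with
    | 0 => (x, y)
    | 1 => (-y, x - y)
    | _ => (y - x, -x)
  | .sr i, (x, y) =>
    match i.val with
    | 0 => (x - y, -y)
    | 1 => (-x, y - x)
    | _ => (y, x)

lemma act_one (v : ZMod 5 × ZMod 5) : act 1 v = v := by
  revert v; decide

lemma act_zero (a : DihedralGroup 3) : act a 0 = 0 := by
  revert a; decide

lemma act_add (a : DihedralGroup 3) (v w : ZMod 5 × ZMod 5) :
    act a (v + w) = act a v + act a w := by
  revert a v w; decide

lemma act_mul (a b : DihedralGroup 3) (v : ZMod 5 × ZMod 5) :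
    act (a * b) v = act a (act b v) := by
  revert a b v; decide

/-- The group `F₂₅ ⋊ S₃` of order 150, realized on
`(ZMod 5 × ZMod 5) × DihedralGroup 3`. -/
def G : Type := (ZMod 5 × ZMod 5) × DihedralGroup 3

instance : DecidableEq G := instDecidableEqProd
instance : Fintype G := instFintypeProd _ _

instance : Group G where
  mul g h := (g.1 + act g.2 h.1, g.2 * h.2)
  one := (0, 1)
  inv g := (-(act g.2⁻¹ g.1), g.2⁻¹)
  mul_assoc := by
    rintro ⟨v, x⟩ ⟨w, y⟩ ⟨u, z⟩
    show (v + act x w + act (x * y) u, x * y * z)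
        = (v + act x (w + act y u), x * (y * z))
    rw [act_add, act_mul, add_assoc, mul_assoc]
  one_mul := by
    rintro ⟨v, x⟩
    show ((0 : ZMod 5 × ZMod 5) + act 1 v, 1 * x) = (v, x)
    rw [act_one, zero_add, one_mul]
  mul_one := by
    rintro ⟨v, x⟩
    show (v + act x 0, x * 1) = (v, x)
    rw [act_zero, add_zero, mul_one]
  inv_mul_cancel := by
    rintro ⟨v, x⟩
    show (-(act x⁻¹ v) + act x⁻¹ v, x⁻¹ * x) = (0, 1)
    rw [neg_add_cancel, inv_mul_cancel]

/-- Projection onto the dihedral part. -/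
def π : G →* DihedralGroup 3 where
  toFun g := g.2
  map_one' := rfl
  map_mul' _ _ := rfl

/-- Sign of a dihedral element. -/
def dsgn : DihedralGroup 3 → Multiplicative (ZMod 2)
  | .r _ => Multiplicative.ofAdd 0
  | .sr _ => Multiplicative.ofAdd 1

lemma dsgn_mul (a b : DihedralGroup 3) : dsgn (a * b) = dsgn a * dsgn b := by
  revert a b; decide

/-- The sign homomorphism `G →* C₂`. -/
def σ : G →* Multiplicative (ZMod 2) where
  toFun g := dsgn g.2
  map_one' := rfl
  map_mul' a b := dsgn_mul a.2 b.2

lemma hHK : π.ker ≤ σ.ker := by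
  rintro ⟨v, x⟩ hg
  have hx : x = 1 := hg
  show dsgn x = 1
  rw [hx]; rfl

end TwoFrob

open TwoFrob in
/-- There exists a finite group `G` with a normal series `1 ◁ H ◁ K ◁ G`
where `|H| = 25`, `|K/H| = 3` and `|G/K| = 2` (built from `F₂₅ˣ ⊇ ⟨β⟩` of
order 3 and the inverting automorphism `γ`), such that `G` has no element of
order `6` and no element of order `15`. -/
theorem exists_twoFrobenius_25_3_2 :
    ∃ (G : Type) (_ : Group G) (H K : Subgroup G), Finite G ∧
      H.Normal ∧ K.Normal ∧ H ≤ K ∧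
      Nat.card H = 25 ∧ H.relIndex K = 3 ∧ K.index = 2 ∧
      ¬(∃ g : G, orderOf g = 6) ∧ ¬(∃ g : G, orderOf g = 15) := by
  have hcardH : Nat.card π.ker = 25 := by
    rw [Nat.card_eq_fintype_card]; decide
  have hcardK : Nat.card σ.ker = 75 := by
    rw [Nat.card_eq_fintype_card]; decide
  have hcardG : Nat.card G = 150 := by
    rw [Nat.card_eq_fintype_card]; decide
  refine ⟨G, inferInstance, π.ker, σ.ker, inferInstance,
    MonoidHom.normal_ker π, MonoidHom.normal_ker σ, hHK, hcardH, ?_, ?_, ?_, ?_⟩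
  · -- relindex = 3
    have h1 := Subgroup.card_mul_index (π.ker.subgroupOf σ.ker)
    have h2 : Nat.card (π.ker.subgroupOf σ.ker) = 25 := by
      rw [Nat.card_congr (Subgroup.subgroupOfEquivOfLe hHK).toEquiv]
      exact hcardH
    rw [h2, hcardK] at h1
    have h3 : π.ker.relIndex σ.ker = (π.ker.subgroupOf σ.ker).index := rfl
    omega
  · -- index = 2
    have h1 := Subgroup.card_mul_index σ.ker
    rw [hcardK, hcardG] at h1
    omega
  · -- no element of order 6
    rintro ⟨g, hg⟩
    have key : ∀ g : G, g ^ 6 = 1 → g ^ 2 = 1 ∨ g ^ 3 = 1 := by decide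
    have h6 : g ^ 6 = 1 := by rw [← hg]; exact pow_orderOf_eq_one g
    rcases key g h6 with h | h <;>
    · have := orderOf_dvd_of_pow_eq_one h
      rw [hg] at this
      exact absurd this (by decide)
  · -- no element of order 15
    rintro ⟨g, hg⟩
    have key : ∀ g : G, g ^ 15 = 1 → g ^ 3 = 1 ∨ g ^ 5 = 1 := by decide
    have h15 : g ^ 15 = 1 := by rw [← hg]; exact pow_orderOf_eq_one g
    rcases key g h15 with h | h <;>
    · have := orderOf_dvd_of_pow_eq_one h
      rw [hg] at this
      exact absurd this (by decide)
end

section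
/- If G is a Frobenius group with kernel K and complement C, π(G) = {2,3,5}, G has no element of order 6 or 15, and G has an element of order 10, then either π(K) = {3} and π(C) = {2,5}, or π(K) = {2,5} and π(C) = {3}. -/
/-- `G` is a Frobenius group with kernel `K` and complement `C`: `K` is a
nontrivial proper normal subgroup, `C` a nontrivial complement to it, and
conjugation by nonidentity elements of `C` fixes no nonidentity element of
`K` (fixed-point-free action). -/
def IsFrobeniusWith (G : Type*) [Group G] (K C : Subgroup G) : Prop :=
  K.Normal ∧ K ⊓ C = ⊥ ∧ K ⊔ C = ⊤ ∧ K ≠ ⊥ ∧ C ≠ ⊥ ∧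
    ∀ c ∈ C, c ≠ 1 → ∀ k ∈ K, c * k * c⁻¹ = k → k = 1

open scoped Pointwise

section Aux

variable {G : Type*} [Group G] [Finite G] {K C : Subgroup G}

lemma frob_centralizer (hN : K.Normal) (hsup : K ⊔ C = ⊤)
    (hfpf : ∀ c ∈ C, c ≠ 1 → ∀ k ∈ K, c * k * c⁻¹ = k → k = 1)
    {g k : G} (hg : g ∉ K) (hk : k ∈ K) (hk1 : k ≠ 1) (hcomm : g * k * g⁻¹ = k) : False := by
  have hmem : g ∈ (K : Set G) * (C : Set G) := by
    rw [← Subgroup.normal_mul, hsup]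
    exact Set.mem_univ g
  obtain ⟨k0, hk0, c, hcC, hgeq⟩ := hmem
  have hgeq : k0 * c = g := hgeq
  have hc1 : c ≠ 1 := by
    rintro rfl
    rw [mul_one] at hgeq
    exact hg (hgeq ▸ hk0)
  have step : ∀ A B : G, A ∈ K → B ∈ K →
      A⁻¹ * (c * A * c⁻¹) = B⁻¹ * (c * B * c⁻¹) → A = B := by
    intro A B hA hB h'
    have h3 : A⁻¹ * (c * A) = B⁻¹ * (c * B) := by
      have := congrArg (· * c) h'
      simpa [mul_assoc] using this
    have h4 : B * A⁻¹ * c = c * (B * A⁻¹) := by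
      calc B * A⁻¹ * c = B * (A⁻¹ * (c * A)) * A⁻¹ := by group
        _ = B * (B⁻¹ * (c * B)) * A⁻¹ := by rw [h3]
        _ = c * (B * A⁻¹) := by group
    have h5 : c⁻¹ * (B * A⁻¹) * c⁻¹⁻¹ = B * A⁻¹ := by
      calc c⁻¹ * (B * A⁻¹) * c⁻¹⁻¹ = c⁻¹ * (B * A⁻¹ * c) := by group
        _ = c⁻¹ * (c * (B * A⁻¹)) := by rw [h4]
        _ = B * A⁻¹ := by group
    have hb1 := hfpf c⁻¹ (inv_mem hcC) (by simpa using hc1) _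
      (mul_mem hB (inv_mem hA)) h5
    exact (mul_inv_eq_one.mp hb1).symm
  set φ : ↥K → ↥K := fun a =>
    ⟨(a : G)⁻¹ * (c * a * c⁻¹), mul_mem (inv_mem a.2) (hN.conj_mem _ a.2 c)⟩ with hφ
  have hinj : Function.Injective φ := fun a b hab =>
    Subtype.ext (step a b a.2 b.2 (congrArg Subtype.val hab))
  obtain ⟨a, ha⟩ := Finite.surjective_of_injective hinj ⟨k0, hk0⟩
  obtain ⟨A, hA⟩ := a
  have haeq : A⁻¹ * (c * A * c⁻¹) = k0 := congrArg Subtype.val ha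
  have hgc : g = A⁻¹ * (c * A) := by rw [← hgeq, ← haeq]; group
  rw [hgc] at hcomm
  have h6 : c * (A * k * A⁻¹) * c⁻¹ = A * k * A⁻¹ := by
    calc c * (A * k * A⁻¹) * c⁻¹
        = A * (A⁻¹ * (c * A) * k * (A⁻¹ * (c * A))⁻¹) * A⁻¹ := by group
      _ = A * k * A⁻¹ := by rw [hcomm]
  have h7 := hfpf c hcC hc1 _ (mul_mem (mul_mem hA hk) (inv_mem hA)) h6
  apply hk1
  calc k = A⁻¹ * (A * k * A⁻¹) * A := by group
    _ = 1 := by rw [h7]; group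

lemma frob_coprime (hN : K.Normal)
    (hfpf : ∀ c ∈ C, c ≠ 1 → ∀ k ∈ K, c * k * c⁻¹ = k → k = 1)
    {p : ℕ} (hp : p.Prime) (hpC : p ∣ Nat.card C) (hpK : p ∣ Nat.card K) : False := by
  haveI := Fact.mk hp
  obtain ⟨c0, hc0⟩ := exists_prime_orderOf_dvd_card' (G := ↥C) p hpC
  set c : G := (c0 : G) with hc
  have hcC : c ∈ C := c0.2
  have hco : orderOf c = p := by rw [hc, Subgroup.orderOf_coe]; exact hc0
  have hc1 : c ≠ 1 := by
    intro h
    rw [h, orderOf_one] at hco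
    exact hp.ne_one hco.symm
  set H := Subgroup.zpowers c with hH
  letI : MulAction ↥H ↥K :=
    MulAction.compHom ↥K ((MulAut.conjNormal : G →* MulAut ↥K).comp H.subtype)
  have hsmul : ∀ (h : ↥H) (k : ↥K), h • k = MulAut.conjNormal (h : G) k := fun h k => rfl
  have hHp : IsPGroup p ↥H := IsPGroup.of_card (by rw [hH, Nat.card_zpowers, hco, pow_one])
  have hmod := hHp.card_modEq_card_fixedPoints (↥K)
  have hfix : ∀ k : ↥K, k ∈ MulAction.fixedPoints ↥H ↥K → k = 1 := by
    intro k hkf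
    have := hkf ⟨c, Subgroup.mem_zpowers c⟩
    rw [hsmul] at this
    have hval : c * (k : G) * c⁻¹ = (k : G) := by
      have := congrArg Subtype.val this
      rwa [MulAut.conjNormal_apply] at this
    exact Subtype.ext (hfpf c hcC hc1 _ k.2 hval)
  have hone : (1 : ↥K) ∈ MulAction.fixedPoints ↥H ↥K := by
    intro h
    rw [hsmul]
    exact map_one _
  have hcard1 : Nat.card (MulAction.fixedPoints ↥H ↥K) = 1 := by
    rw [Nat.card_eq_one_iff_unique]
    constructor
    · constructor
      intro x y
      ext
      rw [hfix x.1 x.2, hfix y.1 y.2]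
    · exact ⟨⟨1, hone⟩⟩
  rw [hcard1] at hmod
  have h0 : Nat.card ↥K ≡ 0 [MOD p] := (Nat.modEq_zero_iff_dvd).mpr hpK
  have h10 : (1 : ℕ) ≡ 0 [MOD p] := hmod.symm.trans h0
  exact hp.ne_one (Nat.dvd_one.mp ((Nat.modEq_zero_iff_dvd).mp h10))

lemma frob_card_quot (hN : K.Normal) (hinf : K ⊓ C = ⊥) (hsup : K ⊔ C = ⊤) :
    Nat.card C = Nat.card (G ⧸ K) := by
  apply Nat.card_eq_of_bijective ((QuotientGroup.mk' K).comp C.subtype)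
  constructor
  · intro x y h
    have h' : ((x : G) : G ⧸ K) = ((y : G) : G ⧸ K) := h
    have hmem : (x : G)⁻¹ * y ∈ K := (QuotientGroup.eq).mp h'
    have hmemC : (x : G)⁻¹ * y ∈ C := mul_mem (inv_mem x.2) y.2
    have : (x : G)⁻¹ * y ∈ K ⊓ C := ⟨hmem, hmemC⟩
    rw [hinf, Subgroup.mem_bot] at this
    exact Subtype.ext (by rw [← inv_mul_eq_one]; exact this)
  · intro q
    obtain ⟨g, rfl⟩ := QuotientGroup.mk_surjective q
    have hg : g ∈ (K : Set G) * (C : Set G) := by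
      rw [← Subgroup.normal_mul, hsup]; exact Set.mem_univ g
    obtain ⟨k, hkK, cc, hccC, rfl⟩ := hg
    refine ⟨⟨cc, hccC⟩, ?_⟩
    show ((cc : G) : G ⧸ K) = ((k * cc : G) : G ⧸ K)
    rw [QuotientGroup.eq]
    have := hN.conj_mem k hkK cc⁻¹
    simpa [mul_assoc] using this

end Aux

/-- If a finite Frobenius group `G` with kernel `K` and complement `C` has
`π(G) = {2,3,5}`, no element of order `6` or `15`, and an element of order
`10`, then either `π(K) = {3}` and `π(C) = {2,5}`, or `π(K) = {2,5}` and
`π(C) = {3}`. -/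
theorem frobenius_kernel_complement_primes (G : Type*) [Group G] [Finite G]
    (K C : Subgroup G) (hF : IsFrobeniusWith G K C)
    (hπ : {p : ℕ | p.Prime ∧ p ∣ Nat.card G} = ({2, 3, 5} : Set ℕ))
    (h6 : ¬(∃ g : G, orderOf g = 6)) (h15 : ¬(∃ g : G, orderOf g = 15))
    (h10 : ∃ g : G, orderOf g = 10) :
    ({p : ℕ | p.Prime ∧ p ∣ Nat.card K} = ({3} : Set ℕ) ∧
      {p : ℕ | p.Prime ∧ p ∣ Nat.card C} = ({2, 5} : Set ℕ)) ∨
    ({p : ℕ | p.Prime ∧ p ∣ Nat.card K} = ({2, 5} : Set ℕ) ∧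
      {p : ℕ | p.Prime ∧ p ∣ Nat.card C} = ({3} : Set ℕ)) := by
  obtain ⟨hN, hinf, hsup, hKbot, hCbot, hfpf⟩ := hF
  haveI := hN
  have hmemG : ∀ p : ℕ, p.Prime → p ∣ Nat.card G → p = 2 ∨ p = 3 ∨ p = 5 := by
    intro p h1 h2
    have : p ∈ ({2, 3, 5} : Set ℕ) := hπ ▸ (⟨h1, h2⟩ : p ∈ {p : ℕ | p.Prime ∧ p ∣ Nat.card G})
    simpa using this
  have hKG : Nat.card K ∣ Nat.card G := Subgroup.card_subgroup_dvd_card K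
  have hCG : Nat.card C ∣ Nat.card G := Subgroup.card_subgroup_dvd_card C
  have hCQ : Nat.card C = Nat.card (G ⧸ K) := frob_card_quot hN hinf hsup
  have hcop : ∀ p : ℕ, p.Prime → p ∣ Nat.card C → p ∣ Nat.card K → False :=
    fun p hp h1 h2 => frob_coprime hN hfpf hp h1 h2
  obtain ⟨g, hgord⟩ := h10
  set q : G ⧸ K := (g : G ⧸ K) with hq
  have hqdvd : orderOf q ∣ 10 := by
    rw [← hgord]; exact orderOf_map_dvd (QuotientGroup.mk' K) g
  have main : (2 ∣ Nat.card K ∧ 5 ∣ Nat.card K) ∨ (2 ∣ Nat.card C ∧ 5 ∣ Nat.card C) := by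
    have hd : orderOf q = 1 ∨ orderOf q = 2 ∨ orderOf q = 5 ∨ orderOf q = 10 := by
      have hle : orderOf q ≤ 10 := Nat.le_of_dvd (by norm_num) hqdvd
      interval_cases h : orderOf q <;> omega
    rcases hd with hd | hd | hd | hd
    · left
      have hgK : g ∈ K := (QuotientGroup.eq_one_iff g).mp (orderOf_eq_one_iff.mp hd)
      have horder : orderOf (⟨g, hgK⟩ : ↥K) = 10 := by
        rw [Subgroup.orderOf_mk]; exact hgord
      have h10K : (10 : ℕ) ∣ Nat.card K := horder ▸ orderOf_dvd_natCard _
      exact ⟨dvd_trans (by norm_num) h10K, dvd_trans (by norm_num) h10K⟩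
    · exfalso
      have hg2K : g ^ 2 ∈ K := by
        rw [← QuotientGroup.eq_one_iff, QuotientGroup.mk_pow, ← hq, ← hd]
        exact pow_orderOf_eq_one q
      have hg5K : g ^ 5 ∉ K := by
        intro h
        have h1 : q ^ 5 = 1 := by
          rw [hq, ← QuotientGroup.mk_pow, QuotientGroup.eq_one_iff]; exact h
        have := orderOf_dvd_of_pow_eq_one h1
        rw [hd] at this; omega
      have hord2 : orderOf (g ^ 2) = 5 := by rw [orderOf_pow, hgord]; norm_num
      have hne : g ^ 2 ≠ 1 := by
        intro h; rw [h, orderOf_one] at hord2; omega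
      exact frob_centralizer hN hsup hfpf hg5K hg2K hne (by group)
    · exfalso
      have hg5K : g ^ 5 ∈ K := by
        rw [← QuotientGroup.eq_one_iff, QuotientGroup.mk_pow, ← hq, ← hd]
        exact pow_orderOf_eq_one q
      have hg2K : g ^ 2 ∉ K := by
        intro h
        have h1 : q ^ 2 = 1 := by
          rw [hq, ← QuotientGroup.mk_pow, QuotientGroup.eq_one_iff]; exact h
        have := orderOf_dvd_of_pow_eq_one h1
        rw [hd] at this; omega
      have hord5 : orderOf (g ^ 5) = 2 := by rw [orderOf_pow, hgord]; norm_num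
      have hne : g ^ 5 ≠ 1 := by
        intro h; rw [h, orderOf_one] at hord5; omega
      exact frob_centralizer hN hsup hfpf hg2K hg5K hne (by group)
    · right
      have h10Q : (10 : ℕ) ∣ Nat.card (G ⧸ K) := hd ▸ orderOf_dvd_natCard q
      rw [← hCQ] at h10Q
      exact ⟨dvd_trans (by norm_num) h10Q, dvd_trans (by norm_num) h10Q⟩
  rcases main with ⟨h2K, h5K⟩ | ⟨h2C, h5C⟩
  · right
    have h3C : (3 : ℕ) ∣ Nat.card C := by
      have hC1 : Nat.card C ≠ 1 := ((Subgroup.one_lt_card_iff_ne_bot C).mpr hCbot).ne'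
      obtain ⟨r, hr, hrd⟩ := Nat.exists_prime_and_dvd hC1
      rcases hmemG r hr (hrd.trans hCG) with rfl | rfl | rfl
      · exact absurd h2K (fun h => hcop 2 hr hrd h)
      · exact hrd
      · exact absurd h5K (fun h => hcop 5 hr hrd h)
    constructor
    · ext p
      simp only [Set.mem_setOf_eq, Set.mem_insert_iff, Set.mem_singleton_iff]
      constructor
      · rintro ⟨hp, hpd⟩
        rcases hmemG p hp (hpd.trans hKG) with rfl | rfl | rfl
        · exact Or.inl rfl
        · exact absurd hpd (fun h => hcop 3 hp h3C h)
        · exact Or.inr rfl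
      · rintro (rfl | rfl)
        · exact ⟨Nat.prime_two, h2K⟩
        · exact ⟨by norm_num, h5K⟩
    · ext p
      simp only [Set.mem_setOf_eq, Set.mem_singleton_iff]
      constructor
      · rintro ⟨hp, hpd⟩
        rcases hmemG p hp (hpd.trans hCG) with rfl | rfl | rfl
        · exact absurd h2K (fun h => hcop 2 hp hpd h)
        · rfl
        · exact absurd h5K (fun h => hcop 5 hp hpd h)
      · rintro rfl
        exact ⟨Nat.prime_three, h3C⟩
  · left
    have h3K : (3 : ℕ) ∣ Nat.card K := by
      have hK1 : Nat.card K ≠ 1 := ((Subgroup.one_lt_card_iff_ne_bot K).mpr hKbot).ne'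
      obtain ⟨r, hr, hrd⟩ := Nat.exists_prime_and_dvd hK1
      rcases hmemG r hr (hrd.trans hKG) with rfl | rfl | rfl
      · exact absurd h2C (fun h => hcop 2 hr h hrd)
      · exact hrd
      · exact absurd h5C (fun h => hcop 5 hr h hrd)
    constructor
    · ext p
      simp only [Set.mem_setOf_eq, Set.mem_singleton_iff]
      constructor
      · rintro ⟨hp, hpd⟩
        rcases hmemG p hp (hpd.trans hKG) with rfl | rfl | rfl
        · exact absurd h2C (fun h => hcop 2 hp h hpd)
        · rfl
        · exact absurd h5C (fun h => hcop 5 hp h hpd)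
      · rintro rfl
        exact ⟨Nat.prime_three, h3K⟩
    · ext p
      simp only [Set.mem_setOf_eq, Set.mem_insert_iff, Set.mem_singleton_iff]
      constructor
      · rintro ⟨hp, hpd⟩
        rcases hmemG p hp (hpd.trans hCG) with rfl | rfl | rfl
        · exact Or.inl rfl
        · exact absurd h3K (fun h => hcop 3 hp hpd h)
        · exact Or.inr rfl
      · rintro (rfl | rfl)
        · exact ⟨Nat.prime_two, h2C⟩
        · exact ⟨by norm_num, h5C⟩
end

section
/- A Sylow 3-subgroup of PGL(2,9) is elementary abelian of order 9, and in particular is not cyclic. -/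
namespace Matrix

variable {n : Type*} [Fintype n] [DecidableEq n]

theorem pow_card_eq_zero_of_isNilpotent {R : Type*} [CommRing R] [IsDomain R]
    {N : Matrix n n R} (hN : IsNilpotent N) : N ^ Fintype.card n = 0 := by
  have hcharpoly : N.charpoly = Polynomial.X ^ Fintype.card n :=
    sub_eq_zero.mp (isNilpotent_charpoly_sub_pow_of_isNilpotent hN).eq_zero
  simpa [hcharpoly] using N.aeval_self_charpoly

theorem pow_char_eq_one_of_pow_char_pow_eq_one {K : Type*} [Field K] (p : ℕ) [Fact p.Prime]
    [CharP K p] (hn : Fintype.card n ≤ p) {B : Matrix n n K} {k : ℕ} (hB : B ^ p ^ k = 1) :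
    B ^ p = 1 := by
  cases isEmpty_or_nonempty n
  · exact Subsingleton.elim _ _
  have hnil : IsNilpotent (B - 1) :=
    ⟨p ^ k, by rw [sub_pow_char_pow_of_commute p k (Commute.one_right B), hB, one_pow, sub_self]⟩
  rw [← sub_eq_zero, ← one_pow p, ← sub_pow_char_of_commute p (Commute.one_right B),
    ← Nat.sub_add_cancel hn, pow_add, pow_card_eq_zero_of_isNilpotent hnil, mul_zero]

namespace GeneralLinearGroup

theorem card_center [Nonempty n] {R : Type*} [CommRing R] :
    Nat.card (Subgroup.center (GL n R)) = Nat.card Rˣ := by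
  rw [center_eq_range_scalar]
  refine Nat.card_congr (MonoidHom.ofInjective fun u v h ↦ ?_).toEquiv.symm
  exact Units.ext (Matrix.scalar_inj.mp (congrArg Units.val h))

theorem pow_char_mem_center_of_pow_char_pow_mem_center {K : Type*} [Field K] (p : ℕ)
    [Fact p.Prime] [CharP K p] [PerfectRing K p] (hn : Fintype.card n ≤ p) {g : GL n K} {k : ℕ}
    (hg : g ^ p ^ k ∈ Subgroup.center (GL n K)) : g ^ p ∈ Subgroup.center (GL n K) := by
  rw [center_eq_range_scalar] at hg ⊢
  obtain ⟨c, hc⟩ := hg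
  obtain ⟨d, rfl⟩ : ∃ d : Kˣ, d ^ p ^ k = c :=
    ⟨Units.map (iterateFrobeniusEquiv K p k).symm.toMonoidHom c,
      Units.ext ((iterateFrobeniusEquiv K p k).apply_symm_apply c)⟩
  set B := (scalar n d)⁻¹ * g
  have hB : B ^ p ^ k = 1 := by
    rw [Commute.mul_pow (Commute.inv_left (scalar_commute _ g)), inv_pow, ← map_pow, hc,
      inv_mul_cancel]
  have hBp : B ^ p = 1 := Units.ext <| by
    simpa using pow_char_eq_one_of_pow_char_pow_eq_one p hn (by simpa using congrArg Units.val hB)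
  refine ⟨d ^ p, ?_⟩
  rw [map_pow, show g = scalar n d * B by simp [B], Commute.mul_pow (scalar_commute _ _), hBp,
    mul_one]

theorem quotient_center_pow_char_eq_one {K : Type*} [Field K] (p : ℕ) [Fact p.Prime] [CharP K p]
    [PerfectRing K p] (hn : Fintype.card n ≤ p) {x : GL n K ⧸ Subgroup.center (GL n K)} {k : ℕ}
    (hx : x ^ p ^ k = 1) : x ^ p = 1 := by
  obtain ⟨g, rfl⟩ := QuotientGroup.mk_surjective x
  rw [← QuotientGroup.mk_pow, QuotientGroup.eq_one_iff] at hx ⊢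
  exact pow_char_mem_center_of_pow_char_pow_mem_center p hn hx

end GeneralLinearGroup

end Matrix

theorem Sylow.card_eq_pow_of_card_eq_pow_mul {G : Type*} [Group G] [Finite G] {p : ℕ}
    [Fact p.Prime] (P : Sylow p G) {k m : ℕ} (hG : Nat.card G = p ^ k * m) (hm : ¬p ∣ m) :
    Nat.card P = p ^ k := by
  have hp : p.Prime := Fact.out
  rw [P.card_eq_multiplicity, hG, Nat.factorization_def _ hp,
    padicValNat.mul (pow_ne_zero k hp.ne_zero) (by rintro rfl; exact hm (dvd_zero p)),
    padicValNat.prime_pow, padicValNat.eq_zero_of_not_dvd hm, add_zero]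

theorem not_isCyclic_of_forall_pow_eq_one {G : Type*} [Group G] [Finite G] {n : ℕ} (hn : 0 < n)
    (hG : n < Nat.card G) (h : ∀ g : G, g ^ n = 1) : ¬IsCyclic G := fun _ ↦
  (Nat.le_of_dvd hn (Monoid.exponent_dvd_of_forall_pow_eq_one h)).not_gt
    (IsCyclic.exponent_eq_card (α := G) ▸ hG)

theorem card_PGL29 : Nat.card PGL29 = 720 := by
  let := Fintype.ofFinite (GaloisField 3 2)
  have hq : Nat.card (GaloisField 3 2) = 9 := GaloisField.card 3 2 two_ne_zero
  have hGL : Nat.card (GL (Fin 2) (GaloisField 3 2)) = 5760 := by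
    rw [Matrix.card_GL_field, ← Nat.card_eq_fintype_card, hq]
    decide
  have hcenter : Nat.card (Subgroup.center (GL (Fin 2) (GaloisField 3 2))) = 8 := by
    rw [Matrix.GeneralLinearGroup.card_center, Nat.card_units, hq]
  have hLagrange := Subgroup.card_eq_card_quotient_mul_card_subgroup
    (Subgroup.center (GL (Fin 2) (GaloisField 3 2)))
  rw [hGL, hcenter] at hLagrange
  unfold PGL29
  omega

/-- A Sylow `3`-subgroup of `PGL(2,9)` is elementary abelian of order `9`
(every element cubes to the identity and it is abelian); in particular it is
not cyclic. -/
theorem sylow_three_PGL29_elementaryAbelian (P : Sylow 3 PGL29) :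
    Nat.card P = 9 ∧ (∀ a b : (P : Subgroup PGL29), a * b = b * a) ∧
    (∀ x : (P : Subgroup PGL29), x ^ 3 = 1) ∧
    ¬IsCyclic (P : Subgroup PGL29) := by
  have hcard : Nat.card P = 3 ^ 2 :=
    P.card_eq_pow_of_card_eq_pow_mul (m := 80) card_PGL29 (by norm_num)
  have hcube (x : (P : Subgroup PGL29)) : x ^ 3 = 1 := by
    have hx : (x : PGL29) ^ 3 ^ 2 = 1 := by
      rw [← hcard, ← Subgroup.coe_pow, pow_card_eq_one', Subgroup.coe_one]
    exact Subtype.ext (Matrix.GeneralLinearGroup.quotient_center_pow_char_eq_one 3 (by simp) hx)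
  exact ⟨hcard, (IsPGroup.isMulCommutative_of_card_eq_prime_sq hcard).is_comm.comm, hcube,
    not_isCyclic_of_forall_pow_eq_one three_pos (by rw [hcard]; norm_num) hcube⟩
end

section
/- If G is a 2-Frobenius group with normal series 1 ◁ H ◁ K ◁ G such that the prime graph of G equals that of PGL(2,9) (vertex set {2,3,5}, single edge {2,5}), then π(K/H) = {3} and π(H) ∪ π(G/K) ⊆ {2,5}. -/
/-- `G` is a 2-Frobenius group with normal series `1 ◁ H ◁ K ◁ G`: `K` is a
Frobenius group with kernel `H`, and `G/H` is a Frobenius group with kernel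
`K/H`. -/
def Is2FrobeniusWith (G : Type*) [Group G] (H K : Subgroup G)
    [H.Normal] [K.Normal] : Prop :=
  H ≤ K ∧
    (∃ C : Subgroup K, IsFrobeniusWith K (H.subgroupOf K) C) ∧
    (∃ C' : Subgroup (G ⧸ H),
      IsFrobeniusWith (G ⧸ H) (K.map (QuotientGroup.mk' H)) C')

theorem Subgroup.mem_of_coprime_orderOf_index {Γ : Type*} [Group Γ] (N : Subgroup Γ) [N.Normal]
    {g : Γ} (hg : (orderOf g).Coprime N.index) : g ∈ N := by
  have hdvd : orderOf (g : Γ ⧸ N) ∣ orderOf g := orderOf_map_dvd (QuotientGroup.mk' N) g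
  have hdvd' : orderOf (g : Γ ⧸ N) ∣ N.index := N.index_eq_card ▸ _root_.orderOf_dvd_natCard _
  exact (QuotientGroup.eq_one_iff g).mp
    (orderOf_eq_one_iff.mp (Nat.eq_one_of_dvd_coprimes hg hdvd hdvd'))

theorem Subgroup.relIndex_eq_card_map_mk' {G : Type*} [Group G] (H K : Subgroup G) [H.Normal] :
    H.relIndex K = Nat.card (K.map (QuotientGroup.mk' H)) := by
  simpa using Subgroup.relIndex_ker (K := K) (QuotientGroup.mk' H)

namespace IsFrobeniusWith

variable {Γ : Type*} [Group Γ] {N C : Subgroup Γ}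

theorem isComplement' (hF : IsFrobeniusWith Γ N C) : C.IsComplement' N := by
  obtain ⟨hN, hinf, hsup, -⟩ := hF
  refine Subgroup.isComplement'_of_disjoint_and_mul_eq_univ
    (disjoint_iff.mpr (inf_comm N C ▸ hinf)) ?_
  rw [← Subgroup.mul_normal, sup_comm, hsup, Subgroup.coe_top]

theorem index_eq_card (hF : IsFrobeniusWith Γ N C) : N.index = Nat.card C :=
  hF.isComplement'.index_eq_card

theorem exists_ne_of_orderOf_eq_two (hF : IsFrobeniusWith Γ N C) {z : Γ} (hz : z ∈ N)
    (hz2 : orderOf z = 2) : ∃ z' ∈ N, orderOf z' = 2 ∧ z' ≠ z := by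
  obtain ⟨hN, -, -, -, hC, hfix⟩ := hF
  obtain ⟨⟨c, hc⟩, hc1⟩ := Subgroup.ne_bot_iff_exists_ne_one.mp hC
  have hsemiconj : SemiconjBy c z (c * z * c⁻¹) := by simp [SemiconjBy]
  refine ⟨c * z * c⁻¹, hN.conj_mem z hz c, hsemiconj.orderOf_eq.symm.trans hz2, fun h => ?_⟩
  have hz1 := hfix c hc (fun h1 => hc1 (Subtype.ext h1)) z hz h
  simp [hz1] at hz2

variable [Finite Γ]

theorem coprime_card (hF : IsFrobeniusWith Γ N C) : (Nat.card N).Coprime (Nat.card C) := by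
  obtain ⟨hN, -, -, -, -, hfix⟩ := hF
  refine Nat.Coprime.symm (Nat.coprime_of_dvd fun p hp hpC hpN => ?_)
  have : Fact p.Prime := ⟨hp⟩
  -- an element of order `p` in `C` acts on `N` by conjugation fixing only `1`: `|N| ≡ 1 [MOD p]`
  obtain ⟨c, hc⟩ := exists_prime_orderOf_dvd_card' p hpC
  let P := Subgroup.zpowers (ConjAct.toConjAct (c : Γ))
  have hP : IsPGroup p P := IsPGroup.of_card (n := 1) (by
    rw [Nat.card_zpowers, MulEquiv.orderOf_eq, Subgroup.orderOf_coe, hc, pow_one])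
  have hfixed : MulAction.fixedPoints P N = {1} := by
    refine Set.eq_singleton_iff_unique_mem.mpr ⟨fun g => smul_one (g : ConjAct Γ), fun n hn => ?_⟩
    have hcn := congrArg Subtype.val (hn ⟨_, Subgroup.mem_zpowers _⟩)
    refine Subtype.ext (hfix c c.2 (fun h1 => ?_) n n.2 hcn)
    rw [← Subgroup.orderOf_coe, h1, orderOf_one] at hc
    exact hp.one_lt.ne' hc.symm
  have hmod := hP.card_modEq_card_fixedPoints N
  rw [hfixed, Nat.card_coe_set_eq, Set.ncard_singleton] at hmod
  exact hp.not_dvd_one ((hmod.dvd_iff dvd_rfl).mp hpN)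

theorem exists_inv_mul_conj_eq (hF : IsFrobeniusWith Γ N C) {c : Γ} (hc : c ∈ C) (hc1 : c ≠ 1)
    {n : Γ} (hn : n ∈ N) : ∃ x ∈ N, x⁻¹ * (c * x * c⁻¹) = n := by
  obtain ⟨hN, -, -, -, -, hfix⟩ := hF
  let φ : N → N := fun x =>
    ⟨x⁻¹ * (c * x * c⁻¹), N.mul_mem (N.inv_mem x.2) (hN.conj_mem _ x.2 c)⟩
  have hφ : φ.Injective := fun x y hxy => by
    have hxy : (x : Γ)⁻¹ * (c * x * c⁻¹) = (y : Γ)⁻¹ * (c * y * c⁻¹) := congrArg Subtype.val hxy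
    have hconj : c * (x * (y : Γ)⁻¹) * c⁻¹ = x * (y : Γ)⁻¹ := by
      calc c * (x * (y : Γ)⁻¹) * c⁻¹
          = x * ((x : Γ)⁻¹ * (c * x * c⁻¹)) * (c * y * c⁻¹)⁻¹ := by group
        _ = x * (y : Γ)⁻¹ := by rw [hxy]; group
    exact Subtype.ext (mul_inv_eq_one.mp (hfix c hc hc1 _ (N.mul_mem x.2 (N.inv_mem y.2)) hconj))
  obtain ⟨x, hx⟩ := Finite.injective_iff_surjective.mp hφ ⟨n, hn⟩
  exact ⟨x, x.2, congrArg Subtype.val hx⟩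

theorem mem_of_commute (hF : IsFrobeniusWith Γ N C) {g n : Γ} (hn : n ∈ N) (hn1 : n ≠ 1)
    (hgn : Commute g n) : g ∈ N := by
  have ⟨hN, _, hsup, _, _, hfix⟩ := hF
  obtain ⟨k, hk, c, hc, rfl⟩ := Subgroup.mem_sup_of_normal_left.mp (hsup ▸ Subgroup.mem_top g)
  by_cases hc1 : c = 1
  · simpa [hc1] using hk
  obtain ⟨x, -, rfl⟩ := hF.exists_inv_mul_conj_eq hc hc1 hk
  -- `g = x⁻¹ c x`, so `c` centralizes the nonidentity kernel element `x n x⁻¹`.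
  have hconj : c * (x * n * x⁻¹) * c⁻¹ = x * n * x⁻¹ := by
    calc c * (x * n * x⁻¹) * c⁻¹
        = x * ((x⁻¹ * (c * x * c⁻¹) * c) * n) * (x⁻¹ * c * x)⁻¹ * x⁻¹ := by group
      _ = x * n * x⁻¹ := by rw [hgn.eq]; group
  have hxn := hfix c hc hc1 _ (hN.conj_mem n hn x) hconj
  exact absurd (by simpa using hxn) hn1

theorem conj_eq_inv_of_orderOf_eq_two (hF : IsFrobeniusWith Γ N C) {c : Γ} (hc : c ∈ C)
    (hc2 : orderOf c = 2) {n : Γ} (hn : n ∈ N) : c * n * c⁻¹ = n⁻¹ := by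
  have hcc : c * c = 1 := by rw [← sq, ← hc2, pow_orderOf_eq_one]
  have hc1 : c ≠ 1 := by rintro rfl; simp at hc2
  obtain ⟨x, -, rfl⟩ := hF.exists_inv_mul_conj_eq hc hc1 hn
  calc c * (x⁻¹ * (c * x * c⁻¹)) * c⁻¹ = c * x⁻¹ * c * x * (c * c)⁻¹ := by group
    _ = c * x⁻¹ * c⁻¹ * x := by rw [hcc, inv_one, mul_one, inv_eq_of_mul_eq_one_right hcc]
    _ = (x⁻¹ * (c * x * c⁻¹))⁻¹ := by group

theorem eq_of_orderOf_eq_two (hF : IsFrobeniusWith Γ N C) {c c' : Γ} (hc : c ∈ C) (hc' : c' ∈ C)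
    (hc2 : orderOf c = 2) (hc'2 : orderOf c' = 2) : c = c' := by
  have ⟨_, _, _, hN, _, hfix⟩ := hF
  obtain ⟨n, hn1⟩ := Subgroup.ne_bot_iff_exists_ne_one.mp hN
  have hconj : (c' * c) * n * (c' * c)⁻¹ = n := by
    calc (c' * c) * n * (c' * c)⁻¹ = c' * (c * n * c⁻¹) * c'⁻¹ := by group
      _ = (c' * n * c'⁻¹)⁻¹ := by rw [hF.conj_eq_inv_of_orderOf_eq_two hc hc2 n.2]; group
      _ = n := by rw [hF.conj_eq_inv_of_orderOf_eq_two hc' hc'2 n.2, inv_inv]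
  have hcc' : c' * c = 1 := by
    by_contra h
    exact hn1 (Subtype.ext (hfix _ (C.mul_mem hc' hc) h n n.2 hconj))
  rw [eq_inv_of_mul_eq_one_right hcc', inv_eq_of_mul_eq_one_right]
  rw [← sq, ← hc'2, pow_orderOf_eq_one]

theorem quotient_eq_of_orderOf_eq_two [N.Normal] (hF : IsFrobeniusWith Γ N C) {x y : Γ ⧸ N}
    (hx : orderOf x = 2) (hy : orderOf y = 2) : x = y := by
  let e := hF.isComplement'.QuotientMulEquiv
  refine e.injective (Subtype.ext (hF.eq_of_orderOf_eq_two (e x).2 (e y).2 ?_ ?_)) <;>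
    rwa [Subgroup.orderOf_coe, MulEquiv.orderOf_eq]

end IsFrobeniusWith

namespace Is2FrobeniusWith

open QuotientGroup

variable {G : Type*} [Group G] {H K : Subgroup G} [H.Normal] [K.Normal]

theorem relIndex_ne_one (h : Is2FrobeniusWith G H K) : H.relIndex K ≠ 1 := by
  obtain ⟨-, -, ⟨C', -, -, -, hKH, -, -⟩⟩ := h
  rw [Subgroup.relIndex_eq_card_map_mk']
  exact fun h1 => hKH (Subgroup.card_eq_one.mp h1)

variable [Finite G]

theorem coprime_card_relIndex (h : Is2FrobeniusWith G H K) :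
    (Nat.card H).Coprime (H.relIndex K) := by
  obtain ⟨hHK, ⟨C, hK⟩, -⟩ := h
  rw [← Nat.card_congr (Subgroup.subgroupOfEquivOfLe hHK).toEquiv, Subgroup.relIndex,
    hK.index_eq_card]
  exact hK.coprime_card

theorem coprime_relIndex_index (h : Is2FrobeniusWith G H K) :
    (H.relIndex K).Coprime K.index := by
  obtain ⟨hHK, -, ⟨C', hGH⟩⟩ := h
  rw [Subgroup.relIndex_eq_card_map_mk',
    ← K.index_map_eq (mk'_surjective H) (show (mk' H).ker ≤ K by rwa [ker_mk']),
    hGH.index_eq_card]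
  exact hGH.coprime_card

theorem not_two_dvd_relIndex (h : Is2FrobeniusWith G H K) : ¬ 2 ∣ H.relIndex K := by
  obtain ⟨hHK, ⟨C, hK⟩, ⟨C', hGH⟩⟩ := h
  have := hK.1
  let e : K ⧸ H.subgroupOf K ≃* K.map (mk' H) := liftEquiv _ ((mk' H).subgroupMap_surjective K)
    (by rw [Subgroup.ker_subgroupMap, ker_mk'])
  intro h2
  rw [Subgroup.relIndex_eq_card_map_mk'] at h2
  obtain ⟨z, hz⟩ := exists_prime_orderOf_dvd_card' 2 h2
  obtain ⟨z', hz'N, hz'2, hne⟩ :=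
    hGH.exists_ne_of_orderOf_eq_two z.2 (by rwa [Subgroup.orderOf_coe])
  have := hK.quotient_eq_of_orderOf_eq_two (x := e.symm ⟨z', hz'N⟩) (y := e.symm z)
    (by rw [MulEquiv.orderOf_eq, Subgroup.orderOf_mk, hz'2]) (by rw [MulEquiv.orderOf_eq, hz])
  exact hne (by simpa using congrArg (fun x => (e x : G ⧸ H)) this)

theorem not_dvd_relIndex_of_commute (h : Is2FrobeniusWith G H K) {a b : G} (hab : Commute a b)
    (ha : (orderOf a).Prime) (hb : (orderOf b).Prime) (hbdvd : ¬ orderOf b ∣ H.relIndex K) :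
    ¬ orderOf a ∣ H.relIndex K := by
  intro hadvd
  have hcopH := h.coprime_card_relIndex
  have hcopI := h.coprime_relIndex_index
  obtain ⟨hHK, ⟨C, hK⟩, ⟨C', hGH⟩⟩ := h
  have haK : a ∈ K := K.mem_of_coprime_orderOf_index (hcopI.coprime_dvd_left hadvd)
  have haH : a ∉ H := fun haH =>
    ha.ne_one (Nat.eq_one_of_dvd_coprimes hcopH (Subgroup.orderOf_dvd_natCard H haH) hadvd)
  have hbK : b ∈ K := by
    have hab' : Commute (mk' H b) (mk' H a) := (hab.map (mk' H)).symm
    have := hGH.mem_of_commute (Subgroup.mem_map_of_mem _ haK)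
      (fun h1 => haH ((eq_one_iff a).mp h1)) hab'
    rwa [← Subgroup.mem_comap, Subgroup.comap_map_eq_self (by rwa [ker_mk'])] at this
  have := hK.1
  have hbH : (⟨b, hbK⟩ : K) ∈ H.subgroupOf K := (H.subgroupOf K).mem_of_coprime_orderOf_index
    (by rwa [Subgroup.orderOf_mk, ← Subgroup.relIndex, hb.coprime_iff_not_dvd])
  have hb1 : (⟨b, hbK⟩ : K) ≠ 1 := fun h1 =>
    hb.ne_one (by rw [← Subgroup.orderOf_mk b hbK, h1, orderOf_one])
  have haH' := hK.mem_of_commute hbH hb1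
    (show Commute (⟨a, haK⟩ : K) ⟨b, hbK⟩ from Subtype.ext hab.eq)
  exact haH (Subgroup.mem_subgroupOf.mp haH')

end Is2FrobeniusWith

theorem twoFrobenius_primeGraph_PGL29_general (G : Type*) [Group G] [Finite G]
    (H K : Subgroup G) [H.Normal] [K.Normal]
    (h2F : Is2FrobeniusWith G H K)
    (hπ : {p : ℕ | p.Prime ∧ p ∣ Nat.card G} = ({2, 3, 5} : Set ℕ))
    (h10 : ∃ g : G, orderOf g = 10) :
    {p : ℕ | p.Prime ∧ p ∣ H.relIndex K} = ({3} : Set ℕ) ∧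
    {p : ℕ | p.Prime ∧ (p ∣ Nat.card H ∨ p ∣ K.index)} ⊆ ({2, 5} : Set ℕ) := by
  have hπG : ∀ p, p.Prime → p ∣ Nat.card G → p = 2 ∨ p = 3 ∨ p = 5 := fun p hp hpG => by
    simpa using hπ.subset ⟨hp, hpG⟩
  obtain ⟨g, hg⟩ := h10
  have h2 := h2F.not_two_dvd_relIndex
  have h5 : ¬ 5 ∣ H.relIndex K := by
    have h2g : orderOf (g ^ 2) = 5 := by rw [orderOf_pow, hg]; norm_num
    have h5g : orderOf (g ^ 5) = 2 := by rw [orderOf_pow, hg]; norm_num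
    simpa [h2g] using h2F.not_dvd_relIndex_of_commute (Commute.pow_pow_self g 2 5)
      (h2g ▸ Nat.prime_five) (h5g ▸ Nat.prime_two) (h5g ▸ h2)
  have hrel : ∀ p, p.Prime → p ∣ H.relIndex K → p = 3 := fun p hp hpd => by
    rcases hπG p hp (hpd.trans ((H.relIndex_dvd_card K).trans K.card_subgroup_dvd_card))
      with rfl | rfl | rfl <;> tauto
  have h3 : 3 ∣ H.relIndex K :=
    hrel _ (Nat.minFac_prime h2F.relIndex_ne_one) (Nat.minFac_dvd _) ▸ Nat.minFac_dvd _
  refine ⟨Set.ext fun p => ⟨fun ⟨hp, hpd⟩ => hrel p hp hpd, ?_⟩, ?_⟩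
  · rintro rfl
    exact ⟨Nat.prime_three, h3⟩
  rintro p ⟨hp, hpd⟩
  have hp3 : p ≠ 3 := by
    rintro rfl
    rcases hpd with hpH | hpK
    · exact Nat.prime_three.ne_one (Nat.eq_one_of_dvd_coprimes h2F.coprime_card_relIndex hpH h3)
    · exact Nat.prime_three.ne_one (Nat.eq_one_of_dvd_coprimes h2F.coprime_relIndex_index h3 hpK)
  have hpG : p ∣ Nat.card G :=
    hpd.elim (·.trans H.card_subgroup_dvd_card) (·.trans K.index_dvd_card)
  rcases hπG p hp hpG with rfl | rfl | rfl <;> simp_all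

/-- If `G` is a 2-Frobenius group with normal series `1 ◁ H ◁ K ◁ G` whose
prime graph equals that of `PGL(2,9)` (vertex set `{2,3,5}`, and single edge
`{2,5}`, i.e. an element of order `10` but none of order `6` or `15`), then
`π(K/H) = {3}` and `π(H) ∪ π(G/K) ⊆ {2,5}`. -/
theorem twoFrobenius_primeGraph_PGL29 (G : Type*) [Group G] [Finite G]
    (H K : Subgroup G) [H.Normal] [K.Normal]
    (h2F : Is2FrobeniusWith G H K)
    (hπ : {p : ℕ | p.Prime ∧ p ∣ Nat.card G} = ({2, 3, 5} : Set ℕ))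
    (h10 : ∃ g : G, orderOf g = 10)
    (h6 : ¬(∃ g : G, orderOf g = 6)) (h15 : ¬(∃ g : G, orderOf g = 15)) :
    {p : ℕ | p.Prime ∧ p ∣ H.relIndex K} = ({3} : Set ℕ) ∧
    {p : ℕ | p.Prime ∧ (p ∣ Nat.card H ∨ p ∣ K.index)} ⊆ ({2, 5} : Set ℕ) :=
  twoFrobenius_primeGraph_PGL29_general G H K h2F hπ h10
end
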